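/- (Lower bound for unbiased subspace compression) Let n > r > s ≥ 0 and q > 0. Consider diagonal matrices X = diag(σ₁,…,σₙ) with σ₁ ≥ … ≥ σₙ > 0 and Σ_{i=s+1}^n σᵢ² ≤ q. For each such X, consider random matrices P ∈ ℝ^{n×r} drawn from any distribution satisfying the unbiasedness condition E[XPPᵀ] = X. Then the minimax quantity sup_X inf_P E[‖XPPᵀ − X‖_F²] is at least ((n−s)/(r−s) − 1)·q. -/

import Mathlib

open Matrix MeasureTheory

instance matrixMeasurableSpace {a b : Type*} : MeasurableSpace (Matrix a b ℝ) :=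
  inferInstanceAs (MeasurableSpace (a → b → ℝ))

/-- Squared Frobenius norm of a matrix. -/
def frobSq {a b : Type*} [Fintype a] [Fintype b] (M : Matrix a b ℝ) : ℝ :=
  ∑ i, ∑ j, (M i j) ^ 2

/-!
Take `σ = t = √(q/(n-s))` on the last `n - s` coordinates and `σ = M` on the first `s`, and
split the rows of `P` into the head block `H` and the tail block `T`. Because `P` has only `r`
columns, `tr(TTᵀ) = tr(TᵀT (1 - HᵀH)) + ‖HTᵀ‖²` and `‖1 - HᵀH‖² = (r - s) + ‖HHᵀ - 1‖²`, so
weighted AM-GM bounds `tr(TTᵀ)` through `‖TTᵀ‖²`, `r - s` and the defects `‖HHᵀ - 1‖²`,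
`‖HTᵀ‖²`; with `u = (n-s)/(r-s)` and `M = t (u + 1)` the head rows of the error pay for those
defects. Unbiasedness forces `E[(PPᵀ)ᵢᵢ] = 1`, hence `E tr(TTᵀ) = n - s`, and the resulting
pointwise bound integrates to `t² ((n-s)²/(r-s) - (n-s)) = ((n-s)/(r-s) - 1) q`, with no loss
in `ε`.
-/

section FrobSq

variable {a b : Type*} [Fintype a] [Fintype b]

lemma frobSq_nonneg (M : Matrix a b ℝ) : 0 ≤ frobSq M := by
  unfold frobSq; positivity

lemma frobSq_transpose (M : Matrix a b ℝ) : frobSq Mᵀ = frobSq M := by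
  rw [frobSq, frobSq, Finset.sum_comm]; rfl

lemma frobSq_neg (M : Matrix a b ℝ) : frobSq (-M) = frobSq M := by
  simp [frobSq]

lemma frobSq_eq_trace (M : Matrix a b ℝ) : frobSq M = trace (M * Mᵀ) := by
  simp [frobSq, trace, mul_apply, sq]

lemma frobSq_transpose_mul_self (M : Matrix a b ℝ) : frobSq (Mᵀ * M) = frobSq (M * Mᵀ) := by
  simp only [frobSq_eq_trace, transpose_mul, transpose_transpose, Matrix.mul_assoc]
  rw [trace_mul_comm]
  simp only [Matrix.mul_assoc]

lemma two_mul_mul_trace_mul_le (c : ℝ) (A : Matrix a b ℝ) (B : Matrix b a ℝ) :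
    2 * c * trace (A * B) ≤ frobSq A + c ^ 2 * frobSq B := by
  rw [← frobSq_transpose B]
  simp only [trace, diag, mul_apply, frobSq, transpose_apply, Finset.mul_sum,
    ← Finset.sum_add_distrib]
  gcongr with i _ j _
  nlinarith [sq_nonneg (A i j - c * B j i)]

lemma frobSq_sub_one [DecidableEq a] (C : Matrix a a ℝ) :
    frobSq (C - 1) = frobSq C - 2 * trace C + Fintype.card a := by
  simp only [frobSq_eq_trace, transpose_sub, transpose_one, sub_mul, mul_sub, mul_one, one_mul,
    trace_sub, trace_transpose, trace_one]
  ring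

end FrobSq

section Rank

variable {α β γ : Type*} [Fintype α] [Fintype β] [Fintype γ] [DecidableEq α] [DecidableEq γ]

lemma frobSq_one_sub_transpose_mul (H : Matrix α γ ℝ) :
    frobSq (1 - Hᵀ * H) = Fintype.card γ - Fintype.card α + frobSq (H * Hᵀ - 1) := by
  rw [← neg_sub, frobSq_neg, frobSq_sub_one, frobSq_sub_one, frobSq_transpose_mul_self,
    trace_mul_comm]
  ring

lemma two_mul_mul_trace_mul_transpose_le (H : Matrix α γ ℝ) (T : Matrix β γ ℝ) (c : ℝ) :
    2 * c * trace (T * Tᵀ) ≤ frobSq (T * Tᵀ)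
      + c ^ 2 * (Fintype.card γ - Fintype.card α + frobSq (H * Hᵀ - 1))
      + 2 * c * frobSq (H * Tᵀ) := by
  have hsplit : trace (T * Tᵀ) = trace (Tᵀ * T * (1 - Hᵀ * H)) + frobSq (H * Tᵀ) := by
    rw [frobSq_eq_trace, mul_sub, mul_one, trace_sub, trace_mul_comm T, transpose_mul,
      transpose_transpose]
    simp only [Matrix.mul_assoc]
    rw [trace_mul_comm H]
    simp only [Matrix.mul_assoc]
    ring
  have hcs := two_mul_mul_trace_mul_le c (Tᵀ * T) (1 - Hᵀ * H)
  rw [frobSq_transpose_mul_self, frobSq_one_sub_transpose_mul] at hcs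
  rw [hsplit]
  linarith

end Rank

def rowBlock {ι γ : Type*} (p : ι → Prop) (P : Matrix ι γ ℝ) : Matrix {i // p i} γ ℝ :=
  P.submatrix Subtype.val id

section Blocks

variable {ι γ : Type*} [Fintype γ]

lemma rowBlock_mul_transpose_apply (p p' : ι → Prop) (P : Matrix ι γ ℝ) (i : {i // p i})
    (j : {j // p' j}) : (rowBlock p P * (rowBlock p' P)ᵀ) i j = (P * Pᵀ) i j := by
  simp [rowBlock, mul_apply]

variable [Fintype ι] [DecidableEq ι]

lemma frobSq_diagonal_mul (σ : ι → ℝ) (A : Matrix ι γ ℝ) :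
    frobSq (diagonal σ * A) = ∑ i, σ i ^ 2 * ∑ j, A i j ^ 2 := by
  simp [frobSq, diagonal_mul, mul_pow, Finset.mul_sum]

variable (p : ι → Prop) [DecidablePred p]

lemma frobSq_diagonal_mul_sub_ge (P : Matrix ι γ ℝ) (σ : ι → ℝ) {t M : ℝ}
    (hσp : ∀ i, p i → σ i = t) (hσnp : ∀ i, ¬ p i → σ i = M) :
    M ^ 2 * (frobSq (rowBlock (¬ p ·) P * (rowBlock (¬ p ·) P)ᵀ - 1)
        + frobSq (rowBlock (¬ p ·) P * (rowBlock p P)ᵀ))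
      + t ^ 2 * frobSq (rowBlock p P * (rowBlock p P)ᵀ - 1)
      ≤ frobSq (diagonal σ * P * Pᵀ - diagonal σ) := by
  set D := P * Pᵀ - 1
  have hF : frobSq (diagonal σ * P * Pᵀ - diagonal σ) = ∑ i, σ i ^ 2 * ∑ j, D i j ^ 2 := by
    rw [Matrix.mul_assoc, ← frobSq_diagonal_mul, mul_sub, mul_one]
  have hHH : frobSq (rowBlock (¬ p ·) P * (rowBlock (¬ p ·) P)ᵀ - 1)
      = ∑ i : {i // ¬ p i}, ∑ j : {j // ¬ p j}, D i j ^ 2 := by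
    simp [frobSq, D, rowBlock_mul_transpose_apply, one_apply, Subtype.ext_iff]
  have hTT : frobSq (rowBlock p P * (rowBlock p P)ᵀ - 1)
      = ∑ i : {i // p i}, ∑ j : {j // p j}, D i j ^ 2 := by
    simp [frobSq, D, rowBlock_mul_transpose_apply, one_apply, Subtype.ext_iff]
  have hHT : frobSq (rowBlock (¬ p ·) P * (rowBlock p P)ᵀ)
      = ∑ i : {i // ¬ p i}, ∑ j : {j // p j}, D i j ^ 2 := by
    refine Finset.sum_congr rfl fun i _ => Finset.sum_congr rfl fun j _ => ?_
    have hij : (i : ι) ≠ j := fun h => i.2 (h ▸ j.2)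
    simp [D, rowBlock_mul_transpose_apply, one_apply_ne hij]
  have hTH : 0 ≤ ∑ i : {i // p i}, ∑ j : {j // ¬ p j}, D i j ^ 2 := by positivity
  rw [hF, hHH, hTT, hHT, ← Fintype.sum_subtype_add_sum_subtype p]
  have hσ : ∑ i : {i // p i}, σ i ^ 2 * ∑ j, D i j ^ 2 + ∑ i : {i // ¬ p i}, σ i ^ 2 * ∑ j, D i j ^ 2
      = t ^ 2 * ∑ i : {i // p i}, ∑ j, D i j ^ 2 + M ^ 2 * ∑ i : {i // ¬ p i}, ∑ j, D i j ^ 2 := by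
    rw [Finset.mul_sum, Finset.mul_sum]
    congr 1 <;> refine Finset.sum_congr rfl fun i _ => ?_
    · rw [hσp i i.2]
    · rw [hσnp i i.2]
  rw [hσ]
  simp only [← Fintype.sum_subtype_add_sum_subtype p (fun j => D _ j ^ 2), Finset.sum_add_distrib]
  linarith [mul_nonneg (sq_nonneg t) hTH]

lemma compression_error_ge [DecidableEq γ] (P : Matrix ι γ ℝ) (σ : ι → ℝ) {t M m k : ℝ}
    (hσp : ∀ i, p i → σ i = t) (hσnp : ∀ i, ¬ p i → σ i = M)
    (hm : (Fintype.card {i // p i} : ℝ) = m)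
    (hk : (Fintype.card γ : ℝ) - Fintype.card {i // ¬ p i} = k) {u : ℝ} (hu : 0 ≤ u)
    (hM : t ^ 2 * (u + 1) ^ 2 ≤ M ^ 2) :
    t ^ 2 * (2 * (u - 1) * ∑ i : {i // p i}, (P * Pᵀ) i i + m - u ^ 2 * k)
      ≤ frobSq (diagonal σ * P * Pᵀ - diagonal σ) := by
  set H := rowBlock (¬ p ·) P
  set T := rowBlock p P
  have htrace : trace (T * Tᵀ) = ∑ i : {i // p i}, (P * Pᵀ) i i := by
    simp [T, trace, rowBlock_mul_transpose_apply]
  have hrank := two_mul_mul_trace_mul_transpose_le H T u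
  have hdev := frobSq_sub_one (T * Tᵀ)
  have hrows : M ^ 2 * (frobSq (H * Hᵀ - 1) + frobSq (H * Tᵀ)) + t ^ 2 * frobSq (T * Tᵀ - 1)
      ≤ frobSq (diagonal σ * P * Pᵀ - diagonal σ) :=
    frobSq_diagonal_mul_sub_ge p P σ hσp hσnp
  rw [hk] at hrank
  rw [hm] at hdev
  rw [htrace] at hrank hdev
  have hM₁ : t ^ 2 * u ^ 2 ≤ M ^ 2 := by nlinarith [sq_nonneg t]
  have hM₂ : t ^ 2 * (2 * u) ≤ M ^ 2 := by nlinarith [sq_nonneg t]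
  nlinarith [mul_le_mul_of_nonneg_left hrank (sq_nonneg t),
    mul_le_mul_of_nonneg_right hM₁ (frobSq_nonneg (H * Hᵀ - 1)),
    mul_le_mul_of_nonneg_right hM₂ (frobSq_nonneg (H * Tᵀ))]

end Blocks

section Unbiased

variable {ι γ : Type*} [Fintype ι] [Fintype γ] [DecidableEq ι]

lemma diagonal_mul_mul_apply (σ : ι → ℝ) (P : Matrix ι γ ℝ) (Q : Matrix γ ι ℝ) (i j : ι) :
    (diagonal σ * P * Q) i j = σ i * (P * Q) i j := by
  rw [Matrix.mul_assoc, diagonal_mul]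

variable {π : Measure (Matrix ι γ ℝ)} {σ : ι → ℝ} {i : ι}

lemma integrable_mul_transpose_apply (hσ : σ i ≠ 0)
    (h : Integrable (fun P => (diagonal σ * P * Pᵀ) i i) π) :
    Integrable (fun P => (P * Pᵀ) i i) π := by
  simpa [diagonal_mul_mul_apply, hσ] using h.const_mul (σ i)⁻¹

lemma integral_mul_transpose_apply_eq_one (hσ : σ i ≠ 0)
    (h : ∫ P, (diagonal σ * P * Pᵀ) i i ∂π = diagonal σ i i) :
    ∫ P, (P * Pᵀ) i i ∂π = 1 := by
  simp only [diagonal_mul_mul_apply, integral_const_mul, diagonal_apply_eq] at h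
  exact mul_left_cancel₀ hσ (h.trans (mul_one _).symm)

variable (p : ι → Prop) [DecidablePred p] [DecidableEq γ] [IsProbabilityMeasure π]

lemma le_integral_compression_error {t M m k u : ℝ}
    (hσp : ∀ i, p i → σ i = t) (hσnp : ∀ i, ¬ p i → σ i = M) (ht : t ≠ 0)
    (hm : (Fintype.card {i // p i} : ℝ) = m)
    (hk : (Fintype.card γ : ℝ) - Fintype.card {i // ¬ p i} = k) (hu : 0 ≤ u)
    (hM : t ^ 2 * (u + 1) ^ 2 ≤ M ^ 2)
    (hint : ∀ i, p i → Integrable (fun P => (diagonal σ * P * Pᵀ) i i) π)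
    (hF : Integrable (fun P => frobSq (diagonal σ * P * Pᵀ - diagonal σ)) π)
    (hE : ∀ i, p i → ∫ P, (diagonal σ * P * Pᵀ) i i ∂π = diagonal σ i i) :
    t ^ 2 * (2 * (u - 1) * m + m - u ^ 2 * k)
      ≤ ∫ P, frobSq (diagonal σ * P * Pᵀ - diagonal σ) ∂π := by
  have hσ (i : {i // p i}) : σ i ≠ 0 := by rw [hσp i i.2]; exact ht
  have hτ : Integrable (fun P => ∑ i : {i // p i}, (P * Pᵀ) i i) π :=
    integrable_finsetSum _ fun i _ => integrable_mul_transpose_apply (hσ i) (hint i i.2)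
  have hEτ : ∫ P, ∑ i : {i // p i}, (P * Pᵀ) i i ∂π = m := by
    rw [integral_finsetSum _ fun i _ => integrable_mul_transpose_apply (hσ i) (hint i i.2)]
    simp [integral_mul_transpose_apply_eq_one (hσ _) (hE _ (Subtype.prop _)), hm]
  calc t ^ 2 * (2 * (u - 1) * m + m - u ^ 2 * k)
      = ∫ P, t ^ 2 * (2 * (u - 1) * ∑ i : {i // p i}, (P * Pᵀ) i i + m - u ^ 2 * k) ∂π := by
        rw [integral_const_mul, integral_sub (by fun_prop) (by fun_prop),
          integral_add (by fun_prop) (by fun_prop), integral_const_mul, hEτ]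
        simp
    _ ≤ ∫ P, frobSq (diagonal σ * P * Pᵀ - diagonal σ) ∂π :=
        integral_mono (by fun_prop) hF fun P => compression_error_ge p P σ hσp hσnp hm hk hu hM

end Unbiased

lemma Fin.card_subtype_not_le_val {n s : ℕ} (h : s ≤ n) :
    Fintype.card {i : Fin n // ¬ s ≤ (i : ℕ)} = s := by
  simp [Fintype.card_subtype, not_le, Fin.card_filter_val_lt, h]

lemma Fin.card_subtype_le_val {n s : ℕ} (h : s ≤ n) :
    Fintype.card {i : Fin n // s ≤ (i : ℕ)} = n - s := by
  have := Fintype.card_subtype_compl (fun i : Fin n => (i : ℕ) < s)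
  simp_all [Fintype.card_subtype, not_lt, Fin.card_filter_val_lt]

/-- Lower bound for unbiased subspace compression: over diagonal matrices
`X = diag(σ₁,…,σₙ)` with decreasing positive entries whose tail energy
`Σ_{i>s} σᵢ²` is at most `q`, the minimax quantity `sup_X inf_P E[‖XPPᵀ − X‖_F²]`
(the infimum being over all distributions of `P` with `E[XPPᵀ] = X`) is at least
`((n−s)/(r−s) − 1)·q`.  Stated via the ε-characterization of the supremum. -/
theorem minimax_lower_bound {n r s : ℕ} (hs : s < r) (hr : r < n) (q : ℝ) (hq : 0 < q) :
    ∀ ε > (0 : ℝ), ∃ σ : Fin n → ℝ,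
      (Antitone σ ∧ (∀ i, 0 < σ i) ∧
        ∑ i ∈ Finset.univ.filter (fun i : Fin n => s ≤ (i : ℕ)), σ i ^ 2 ≤ q) ∧
      ∀ π : Measure (Matrix (Fin n) (Fin r) ℝ), IsProbabilityMeasure π →
        (∀ i j, Integrable
          (fun P => (Matrix.diagonal σ * P * Pᵀ) i j) π) →
        Integrable
          (fun P => frobSq (Matrix.diagonal σ * P * Pᵀ - Matrix.diagonal σ)) π →
        -- unbiasedness condition `E[XPPᵀ] = X`
        (∀ i j, ∫ P, (Matrix.diagonal σ * P * Pᵀ) i j ∂π = Matrix.diagonal σ i j) →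
        (((n : ℝ) - s) / ((r : ℝ) - s) - 1) * q - ε ≤
          ∫ P, frobSq (Matrix.diagonal σ * P * Pᵀ - Matrix.diagonal σ) ∂π := by
  intro ε hε
  have hsn : s ≤ n := by omega
  set m : ℝ := n - s
  set k : ℝ := r - s
  have hk : 0 < k := sub_pos.2 (mod_cast hs)
  have hm : 0 < m := sub_pos.2 (mod_cast hs.trans hr)
  have hcard : (Fintype.card {i : Fin n // s ≤ (i : ℕ)} : ℝ) = m := by
    rw [Fin.card_subtype_le_val hsn, Nat.cast_sub hsn]
  have hcard' : (Fintype.card (Fin r) : ℝ) - Fintype.card {i : Fin n // ¬ s ≤ (i : ℕ)} = k := by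
    rw [Fintype.card_fin, Fin.card_subtype_not_le_val hsn]
  set u := m / k
  have hu : 0 ≤ u := by positivity
  set t := Real.sqrt (q / m)
  have ht : 0 < t := Real.sqrt_pos.2 (by positivity)
  have htm : t ^ 2 * m = q := by rw [Real.sq_sqrt (by positivity)]; field_simp
  let σ : Fin n → ℝ := fun i => if s ≤ (i : ℕ) then t else t * (u + 1)
  refine ⟨σ, ⟨fun i j hij => ?_, fun i => ?_, ?_⟩, fun π _ hint hF hE => ?_⟩
  · have hij : (i : ℕ) ≤ j := hij
    dsimp only [σ]
    split_ifs <;> first | omega | nlinarith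
  · dsimp only [σ]
    split_ifs <;> positivity
  · rw [Finset.sum_congr rfl fun i hi => show σ i ^ 2 = t ^ 2 by
        simp [σ, (Finset.mem_filter.1 hi).2],
      Finset.sum_const, nsmul_eq_mul, ← Fintype.card_subtype, hcard, mul_comm, htm]
  · have hbound : t ^ 2 * (2 * (u - 1) * m + m - u ^ 2 * k) = (m / k - 1) * q := by
      rw [← htm]; simp only [u]; field_simp; ring
    have := le_integral_compression_error (fun i : Fin n => s ≤ (i : ℕ)) (π := π) (σ := σ)
      (fun i hi => if_pos hi) (fun i hi => if_neg hi) ht.ne' hcard hcard' hu (mul_pow t _ 2).ge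
      (fun i _ => hint i i) hF (fun i _ => hE i i)
    linarith
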